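/- arXiv:1006.5415 — 2 statements merged into one kernel-verified Lean document; each statement's English description precedes it below -/
import Mathlib

section
/- Let ñ ∈ ℝ_+^N be a steady state of the system that is not an ESS, i.e. there exists an index i with λ_i := r_i − ∫_Ω K_i(α) L(Σ_{j=1}^N B_j(α) ñ_j) dP(α) > 0. Then no solution n(t) of the system with initial data satisfying n_i(0) > 0 for all i converges to ñ as t → +∞. -/
open MeasureTheory Filter Topology Set

/-! The growth rate `a_i(t) = r_i − ∫ K_i L(Σ_j B_j n_j(t)) dP` of species `i` depends
continuously on the state, so along a solution converging to `ñ` it tends to `λ_i > 0`. As `n_i`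
solves the scalar linear equation `n_i' = a_i(t) n_i` with `n_i(0) > 0`, it never vanishes, so it
eventually increases and cannot tend to `ñ_i`, which the steady-state equation forces to be `0`. -/

section ScalarLinearODE

variable {f a : ℝ → ℝ}

/-- If `f` vanished at some time, then by uniqueness for the linear ODE `x' = a(t) x` it would
coincide with the zero solution, also at time `0`. -/
theorem pos_of_hasDerivAt_mul_self (ha : ContinuousOn a (Ici 0))
    (hf : ∀ t, 0 ≤ t → HasDerivAt f (a t * f t) t) (h0 : 0 < f 0) {t : ℝ} (ht : 0 ≤ t) :
    0 < f t := by
  by_contra! hft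
  have hf_cont : ContinuousOn f (Ici 0) := fun s hs => (hf s hs).continuousAt.continuousWithinAt
  obtain ⟨t₀, ht₀, hzero⟩ :=
    intermediate_value_Icc' ht (hf_cont.mono Icc_subset_Ici_self) ⟨hft, h0.le⟩
  obtain ⟨C, hC⟩ := isCompact_Icc.exists_bound_of_continuousOn
    (ha.mono (Icc_subset_Ici_self : Icc 0 t₀ ⊆ Ici 0))
  have hlip : ∀ s ∈ Ioc 0 t₀, LipschitzOnWith C.toNNReal (fun x => a s * x) univ := by
    intro s hs
    refine (LipschitzWith.of_dist_le_mul fun x y => ?_).lipschitzOnWith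
    rw [Real.dist_eq, Real.dist_eq, ← mul_sub, abs_mul]
    gcongr
    exact (hC s (Ioc_subset_Icc_self hs)).trans (Real.le_coe_toNNReal C)
  have heq := ODE_solution_unique_of_mem_Icc_left (g := fun _ => 0) hlip
    (hf_cont.mono Icc_subset_Ici_self)
    (fun s hs => (hf s hs.1.le).hasDerivWithinAt) (fun _ _ => mem_univ _)
    continuousOn_const (fun s _ => by simpa using hasDerivWithinAt_const s (Iic s) (0 : ℝ))
    (fun _ _ => mem_univ _) hzero
  exact h0.ne' (heq ⟨le_rfl, ht₀.1⟩)

theorem not_tendsto_zero_of_hasDerivAt_mul_self (ha : ContinuousOn a (Ici 0))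
    (hf : ∀ t, 0 ≤ t → HasDerivAt f (a t * f t) t) (h0 : 0 < f 0)
    (ha_pos : ∀ᶠ t in atTop, 0 < a t) : ¬ Tendsto f atTop (𝓝 0) := by
  intro hlim
  obtain ⟨T, hT⟩ := eventually_atTop.mp (ha_pos.and (eventually_ge_atTop 0))
  have hpos : ∀ t, T ≤ t → 0 < f t := fun t ht => pos_of_hasDerivAt_mul_self ha hf h0 (hT t ht).2
  have hmono : MonotoneOn f (Ici T) := by
    refine monotoneOn_of_hasDerivWithinAt_nonneg (f' := fun s => a s * f s) (convex_Ici T)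
      (fun s hs => (hf s (hT s hs).2).continuousAt.continuousWithinAt) (fun s hs => ?_)
      (fun s hs => ?_)
    · rw [interior_Ici] at hs
      exact (hf s (hT s hs.le).2).hasDerivWithinAt
    · rw [interior_Ici] at hs
      exact (mul_pos (hT s hs.le).1 (hpos s hs.le)).le
  have hle : f T ≤ 0 := ge_of_tendsto hlim <| eventually_atTop.mpr
    ⟨T, fun t ht => hmono self_mem_Ici (mem_Ici.mpr ht) ht⟩
  exact (hpos T le_rfl).not_ge hle

end ScalarLinearODE

section FitnessIntegral

variable {Ω ι : Type*} [MeasurableSpace Ω] {P : Measure Ω} [Fintype ι]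

theorem exists_ae_abs_sum_mul_le {B : ι → Ω → ℝ} (hB : ∀ j, MemLp (B j) ⊤ P) :
    ∃ M, 0 ≤ M ∧ ∀ᵐ α ∂P, ∀ m : ι → ℝ, |∑ j, B j α * m j| ≤ M * ‖m‖ := by
  refine ⟨∑ j, lpNorm (B j) ⊤ P, Finset.sum_nonneg fun j _ => lpNorm_nonneg, ?_⟩
  filter_upwards [ae_all_iff.mpr fun j => ae_le_lpNorm_exponent_top (hB j)] with α hα m
  calc |∑ j, B j α * m j| ≤ ∑ j, ‖B j α‖ * ‖m j‖ := by
        simpa only [Real.norm_eq_abs, abs_mul] using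
          Finset.abs_sum_le_sum_abs (fun j => B j α * m j) Finset.univ
    _ ≤ ∑ j, lpNorm (B j) ⊤ P * ‖m‖ :=
        Finset.sum_le_sum fun j _ => mul_le_mul (hα j) (norm_le_pi_norm m j)
          (norm_nonneg _) lpNorm_nonneg
    _ = (∑ j, lpNorm (B j) ⊤ P) * ‖m‖ := (Finset.sum_mul _ _ _).symm

/-- On a ball of states the argument of `L` stays a.e. in a compact interval, so the integrand is
dominated by a multiple of `|K|`. -/
theorem continuous_integral_mul_comp_sum {K : Ω → ℝ} {B : ι → Ω → ℝ} {L : ℝ → ℝ}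
    (hK : Integrable K P) (hB : ∀ j, MemLp (B j) ⊤ P) (hL : Continuous L) :
    Continuous fun m : ι → ℝ => ∫ α, K α * L (∑ j, B j α * m j) ∂P := by
  refine continuous_iff_continuousAt.mpr fun m₀ => ?_
  obtain ⟨M, hM_nonneg, hM⟩ := exists_ae_abs_sum_mul_le hB
  set ρ := M * (‖m₀‖ + 1)
  obtain ⟨D, hD⟩ := isCompact_Icc.exists_bound_of_continuousOn (s := Icc (-ρ) ρ) hL.continuousOn
  refine continuousAt_of_dominated (bound := fun α => D * ‖K α‖) (Eventually.of_forall fun m =>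
      hK.1.mul (hL.comp_aestronglyMeasurable (Finset.aestronglyMeasurable_fun_sum _
        fun j _ => (hB j).1.mul_const (m j)))) ?_ (hK.norm.const_mul D)
    (Eventually.of_forall fun α => Continuous.continuousAt (by fun_prop))
  filter_upwards [Metric.closedBall_mem_nhds m₀ one_pos] with m hm
  filter_upwards [hM] with α hα
  have hmem : ∑ j, B j α * m j ∈ Icc (-ρ) ρ :=
    abs_le.mp ((hα m).trans (mul_le_mul_of_nonneg_left (norm_le_of_mem_closedBall hm) hM_nonneg))
  rw [norm_mul, mul_comm]
  exact mul_le_mul_of_nonneg_right (hD _ hmem) (norm_nonneg _)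

end FitnessIntegral

theorem non_ESS_steady_state_not_attracting_general
    {Ω : Type*} [MeasurableSpace Ω] (P : Measure Ω) {N : ℕ}
    (L : ℝ → ℝ) (hLC1 : ContDiff ℝ 1 L)
    (r : Fin N → ℝ) (K B : Fin N → Ω → ℝ)
    (hKL1 : ∀ i, Integrable (K i) P)
    (hBLinf : ∀ i, MemLp (B i) ⊤ P)
    -- a steady state which is not an ESS
    (ntilde : Fin N → ℝ)
    (hsteady : ∀ i, (r i - ∫ α, K i α * L (∑ j, B j α * ntilde j) ∂P) * ntilde i = 0)
    (hnotESS : ∃ i, 0 < r i - ∫ α, K i α * L (∑ j, B j α * ntilde j) ∂P)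
    -- a solution with strictly positive initial data
    (n : ℝ → Fin N → ℝ) (h0 : ∀ i, 0 < n 0 i)
    (hsol : ∀ t : ℝ, 0 ≤ t → ∀ i, HasDerivAt (fun s => n s i)
      ((r i - ∫ α, K i α * L (∑ j, B j α * n t j) ∂P) * n t i) t) :
    ¬ Filter.Tendsto n Filter.atTop (𝓝 ntilde) := by
  intro htend
  obtain ⟨i, hlam⟩ := hnotESS
  set F : (Fin N → ℝ) → ℝ := fun m => ∫ α, K i α * L (∑ j, B j α * m j) ∂P
  have hF : Continuous F := continuous_integral_mul_comp_sum (hKL1 i) hBLinf hLC1.continuous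
  have hn : ContinuousOn n (Ici 0) := fun t ht =>
    (continuousAt_pi.mpr fun j => (hsol t ht j).continuousAt).continuousWithinAt
  have hrate : Tendsto (fun t => r i - F (n t)) atTop (𝓝 (r i - F ntilde)) :=
    tendsto_const_nhds.sub ((hF.tendsto ntilde).comp htend)
  have hnt : ntilde i = 0 := (mul_eq_zero.mp (hsteady i)).resolve_left hlam.ne'
  refine not_tendsto_zero_of_hasDerivAt_mul_self
    (continuousOn_const.sub (hF.comp_continuousOn hn)) (hsol · · i) (h0 i)
    (hrate.eventually (eventually_gt_nhds hlam)) ?_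
  simpa [hnt] using tendsto_pi_nhds.mp htend i

/-- If `ñ ∈ ℝ_+^N` is a steady state of the generalized competitive system which is not an
ESS (i.e. `λ_i := r_i − ∫ K_i L(Σ_j B_j ñ_j) dP > 0` for some `i`), then no solution with
strictly positive initial data converges to `ñ`. -/
theorem non_ESS_steady_state_not_attracting
    {Ω : Type*} [MeasurableSpace Ω] (P : Measure Ω) {N : ℕ}
    (L : ℝ → ℝ) (hLC1 : ContDiff ℝ 1 L) (hLnonneg : ∀ x : ℝ, 0 ≤ x → 0 ≤ L x)
    (r : Fin N → ℝ) (K B : Fin N → Ω → ℝ)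
    (hKnonneg : ∀ i α, 0 ≤ K i α) (hBnonneg : ∀ i α, 0 ≤ B i α)
    (hKL1 : ∀ i, Integrable (K i) P) (hKLinf : ∀ i, MemLp (K i) ⊤ P)
    (hBL1 : ∀ i, Integrable (B i) P) (hBLinf : ∀ i, MemLp (B i) ⊤ P)
    -- a steady state which is not an ESS
    (ntilde : Fin N → ℝ) (hnt : ∀ i, 0 ≤ ntilde i)
    (hsteady : ∀ i, (r i - ∫ α, K i α * L (∑ j, B j α * ntilde j) ∂P) * ntilde i = 0)
    (hnotESS : ∃ i, 0 < r i - ∫ α, K i α * L (∑ j, B j α * ntilde j) ∂P)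
    -- a solution with strictly positive initial data
    (n : ℝ → Fin N → ℝ) (h0 : ∀ i, 0 < n 0 i)
    (hsol : ∀ t : ℝ, 0 ≤ t → ∀ i, HasDerivAt (fun s => n s i)
      ((r i - ∫ α, K i α * L (∑ j, B j α * n t j) ∂P) * n t i) t) :
    ¬ Filter.Tendsto n Filter.atTop (𝓝 ntilde) :=
  non_ESS_steady_state_not_attracting_general P L hLC1 r K B hKL1 hBLinf ntilde hsteady hnotESS n h0
    hsol
end

section
/- Suppose that for some index i one has r_i > ∫_Ω K_i(α) L(∞) dP(α), where L(∞) := lim_{x→+∞} L(x) ∈ (0, +∞] is finite and L ≤ L(∞) on ℝ_+. Then every solution n(t) of the system with n_i(0) > 0 satisfies n_i(t) → +∞ as t → +∞. -/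
/-!
By uniqueness for the scalar linear equations `n_k' = g_k(t) n_k`, whose coefficients are bounded
on compact time intervals, no component of the solution can change sign, so the solution stays in
the nonnegative orthant. There the argument of `L` is nonnegative, so `L ≤ L(∞)` and the
per-capita growth rate of species `i` is at least `c = r_i - ∫ K_i L(∞) dP > 0`.
Hence `n_i(t) ≥ n_i(0) e^{ct}`.
-/

open MeasureTheory Filter Topology Set

theorem nonneg_of_hasDerivAt_mul_self {f g : ℝ → ℝ} {a b M : ℝ}
    (hf : ∀ t ∈ Icc a b, HasDerivAt f (g t * f t) t) (hg : ∀ t ∈ Icc a b, |g t| ≤ M)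
    (ha : 0 ≤ f a) : ∀ t ∈ Icc a b, 0 ≤ f t := by
  intro t ht
  by_contra! hneg
  have hcont : ContinuousOn f (Icc a b) := fun s hs => (hf s hs).continuousAt.continuousWithinAt
  obtain ⟨s, hs, hfs⟩ : ∃ s ∈ Icc a t, f s = 0 :=
    intermediate_value_Icc' ht.1 (hcont.mono (Icc_subset_Icc_right ht.2)) ⟨hneg.le, ha⟩
  have hsub : Icc s t ⊆ Icc a b := Icc_subset_Icc hs.1 ht.2
  have hzero := eq_zero_of_abs_deriv_le_mul_abs_self_of_eq_zero_right (hcont.mono hsub)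
    (fun x hx => (hf x (hsub (Ico_subset_Icc_self hx))).hasDerivWithinAt) hfs
    (fun x hx => by
      rw [norm_mul, Real.norm_eq_abs]
      exact mul_le_mul_of_nonneg_right (hg x (hsub (Ico_subset_Icc_self hx))) (norm_nonneg _))
    t ⟨hs.2, le_rfl⟩
  exact hneg.ne hzero

theorem mul_exp_le_of_hasDerivAt {f f' : ℝ → ℝ} {c : ℝ}
    (hf : ∀ t, 0 ≤ t → HasDerivAt f (f' t) t) (hf' : ∀ t, 0 ≤ t → c * f t ≤ f' t)
    {t : ℝ} (ht : 0 ≤ t) : f 0 * Real.exp (c * t) ≤ f t := by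
  set h : ℝ → ℝ := fun s => f s * Real.exp (-c * s)
  set h' : ℝ → ℝ := fun s => (f' s - c * f s) * Real.exp (-c * s)
  have hh : ∀ s, 0 ≤ s → HasDerivAt h (h' s) s := by
    intro s hs
    have hlin : HasDerivAt (fun u => -c * u) (-c) s := by
      simpa using (hasDerivAt_id' s).const_mul (-c)
    exact ((hf s hs).mul hlin.exp).congr_deriv (by ring)
  have hmono : MonotoneOn h (Ici 0) := by
    refine monotoneOn_of_hasDerivWithinAt_nonneg (f' := h') (convex_Ici 0)
      (fun s hs => (hh s hs).continuousAt.continuousWithinAt) (fun s hs => ?_) (fun s hs => ?_) <;>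
      rw [interior_Ici] at hs
    · exact (hh s hs.le).hasDerivWithinAt
    · exact mul_nonneg (sub_nonneg.2 (hf' s hs.le)) (Real.exp_nonneg _)
  have h0t : f 0 ≤ f t * Real.exp (-c * t) := by
    simpa [h] using hmono self_mem_Ici ht ht
  calc f 0 * Real.exp (c * t) ≤ f t * Real.exp (-c * t) * Real.exp (c * t) :=
        mul_le_mul_of_nonneg_right h0t (Real.exp_nonneg _)
    _ = f t := by rw [mul_assoc, ← Real.exp_add, neg_mul, neg_add_cancel, Real.exp_zero, mul_one]

theorem tendsto_atTop_of_hasDerivAt_ge_mul {f f' : ℝ → ℝ} {c : ℝ} (hc : 0 < c) (h0 : 0 < f 0)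
    (hf : ∀ t, 0 ≤ t → HasDerivAt f (f' t) t) (hf' : ∀ t, 0 ≤ t → c * f t ≤ f' t) :
    Tendsto f atTop atTop :=
  tendsto_atTop_mono' atTop
    ((eventually_ge_atTop 0).mono fun _ ht => mul_exp_le_of_hasDerivAt hf hf' ht)
    ((Real.tendsto_exp_atTop.comp (tendsto_id.const_mul_atTop hc)).const_mul_atTop h0)

section CompetitiveSystem

variable {Ω ι : Type*} [MeasurableSpace Ω] [Fintype ι]
  (P : Measure Ω) (L : ℝ → ℝ) (r : ι → ℝ) (K B : ι → Ω → ℝ)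

noncomputable def perCapitaGrowthRate (x : ι → ℝ) (k : ι) : ℝ :=
  r k - ∫ α, K k α * L (∑ j, B j α * x j) ∂P

variable {P L r K B}

theorem exists_abs_perCapitaGrowthRate_le (hL : Continuous L) {k : ι} (hK : Integrable (K k) P)
    (hB : ∀ j, MemLp (B j) ⊤ P) (R : ℝ) :
    ∃ M, ∀ x : ι → ℝ, ‖x‖ ≤ R → |perCapitaGrowthRate P L r K B x k| ≤ M := by
  set S : ι → ℝ := fun j => lpNorm (B j) ⊤ P
  have hS : ∀ᵐ α ∂P, ∀ j, |B j α| ≤ S j := ae_all_iff.2 fun j => ae_le_lpNorm_exponent_top (hB j)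
  set D : ℝ := ∑ j, S j * R
  obtain ⟨C, hC⟩ := (isCompact_Icc (a := -D) (b := D)).exists_bound_of_continuousOn hL.continuousOn
  refine ⟨|r k| + ∫ α, ‖K k α‖ * C ∂P, fun x hx => ?_⟩
  have hsum : ∀ α, (∀ j, |B j α| ≤ S j) → ∑ j, B j α * x j ∈ Icc (-D) D := by
    intro α hα
    refine abs_le.1 ((Finset.abs_sum_le_sum_abs _ _).trans (Finset.sum_le_sum fun j _ => ?_))
    rw [abs_mul]
    exact mul_le_mul (hα j) ((norm_le_pi_norm x j).trans hx) (abs_nonneg _) lpNorm_nonneg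
  have hint : |∫ α, K k α * L (∑ j, B j α * x j) ∂P| ≤ ∫ α, ‖K k α‖ * C ∂P := by
    rw [← Real.norm_eq_abs]
    refine norm_integral_le_of_norm_le (hK.norm.mul_const C) ?_
    filter_upwards [hS] with α hα
    rw [norm_mul]
    exact mul_le_mul_of_nonneg_left (hC _ (hsum α hα)) (norm_nonneg _)
  exact (abs_sub _ _).trans (add_le_add_right hint _)

theorem sub_integral_mul_le_perCapitaGrowthRate {Linf : ℝ} {k : ι} (hK0 : ∀ α, 0 ≤ K k α)
    (hK : Integrable (K k) P) (hB0 : ∀ j α, 0 ≤ B j α) (hL0 : ∀ s, 0 ≤ s → 0 ≤ L s)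
    (hLle : ∀ s, 0 ≤ s → L s ≤ Linf) {x : ι → ℝ} (hx : 0 ≤ x) :
    r k - ∫ α, K k α * Linf ∂P ≤ perCapitaGrowthRate P L r K B x k := by
  have hsum : ∀ α, 0 ≤ ∑ j, B j α * x j :=
    fun α => Finset.sum_nonneg fun j _ => mul_nonneg (hB0 j α) (hx j)
  have hint : ∫ α, K k α * L (∑ j, B j α * x j) ∂P ≤ ∫ α, K k α * Linf ∂P :=
    integral_mono_of_nonneg (Eventually.of_forall fun α => mul_nonneg (hK0 α) (hL0 _ (hsum α)))
      (hK.mul_const Linf)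
      (Eventually.of_forall fun α => mul_le_mul_of_nonneg_left (hLle _ (hsum α)) (hK0 α))
  exact sub_le_sub_left hint _

theorem nonneg_of_hasDerivAt_perCapitaGrowthRate (hL : Continuous L)
    (hK : ∀ k, Integrable (K k) P) (hB : ∀ j, MemLp (B j) ⊤ P) {n : ℝ → ι → ℝ}
    (hn : ∀ t, 0 ≤ t → ∀ k, HasDerivAt (fun s => n s k)
      (perCapitaGrowthRate P L r K B (n t) k * n t k) t)
    (h0 : 0 ≤ n 0) {t : ℝ} (ht : 0 ≤ t) : 0 ≤ n t := by
  intro k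
  obtain ⟨R, hR⟩ := isCompact_Icc.exists_bound_of_continuousOn (continuousOn_pi.2 fun j s hs =>
    (hn s hs.1 j).continuousAt.continuousWithinAt : ContinuousOn n (Icc (0 : ℝ) t))
  obtain ⟨M, hM⟩ := exists_abs_perCapitaGrowthRate_le (r := r) hL (hK k) hB R
  exact nonneg_of_hasDerivAt_mul_self (fun s hs => hn s hs.1 k) (fun s hs => hM _ (hR s hs))
    (h0 k) t ⟨ht, le_rfl⟩

end CompetitiveSystem

theorem explosion_of_supercritical_component_general
    {Ω : Type*} [MeasurableSpace Ω] (P : Measure Ω) {N : ℕ}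
    (L : ℝ → ℝ) (hLC1 : ContDiff ℝ 1 L) (hLnonneg : ∀ x : ℝ, 0 ≤ x → 0 ≤ L x)
    (r : Fin N → ℝ) (K B : Fin N → Ω → ℝ)
    (hKnonneg : ∀ i α, 0 ≤ K i α) (hBnonneg : ∀ i α, 0 ≤ B i α)
    (hKL1 : ∀ i, Integrable (K i) P)
    (hBLinf : ∀ i, MemLp (B i) ⊤ P)
    -- L(∞) finite, positive, and L ≤ L(∞) on ℝ_+
    (Linf : ℝ)
    (hLle : ∀ x : ℝ, 0 ≤ x → L x ≤ Linf)
    -- the supercritical index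
    (i : Fin N) (hri : ∫ α, K i α * Linf ∂P < r i)
    -- a solution with nonnegative initial data and n_i(0) > 0
    (n : ℝ → Fin N → ℝ) (h0 : ∀ j, 0 ≤ n 0 j) (h0i : 0 < n 0 i)
    (hsol : ∀ t : ℝ, 0 ≤ t → ∀ k, HasDerivAt (fun s => n s k)
      ((r k - ∫ α, K k α * L (∑ j, B j α * n t j) ∂P) * n t k) t) :
    Filter.Tendsto (fun t => n t i) Filter.atTop Filter.atTop := by
  have hnonneg : ∀ t, 0 ≤ t → 0 ≤ n t := fun t ht =>
    nonneg_of_hasDerivAt_perCapitaGrowthRate hLC1.continuous hKL1 hBLinf hsol h0 ht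
  refine tendsto_atTop_of_hasDerivAt_ge_mul (sub_pos.2 hri) h0i (fun t ht => hsol t ht i)
    fun t ht => mul_le_mul_of_nonneg_right ?_ (hnonneg t ht i)
  exact sub_integral_mul_le_perCapitaGrowthRate (hKnonneg i) (hKL1 i) hBnonneg hLnonneg hLle
    (hnonneg t ht)

/-- If for some index `i` one has `r_i > ∫ K_i(α) L(∞) dP(α)` where `L(∞)` is finite and
`L ≤ L(∞)` on `ℝ_+`, then every solution of the generalized competitive system with
`n_i(0) > 0` (and nonnegative initial data) satisfies `n_i(t) → +∞`. -/
theorem explosion_of_supercritical_component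
    {Ω : Type*} [MeasurableSpace Ω] (P : Measure Ω) {N : ℕ}
    (L : ℝ → ℝ) (hLC1 : ContDiff ℝ 1 L) (hLnonneg : ∀ x : ℝ, 0 ≤ x → 0 ≤ L x)
    (hLmono : MonotoneOn L (Set.Ici (0 : ℝ)))
    (r : Fin N → ℝ) (K B : Fin N → Ω → ℝ)
    (hKnonneg : ∀ i α, 0 ≤ K i α) (hBnonneg : ∀ i α, 0 ≤ B i α)
    (hKL1 : ∀ i, Integrable (K i) P) (hKLinf : ∀ i, MemLp (K i) ⊤ P)
    (hBL1 : ∀ i, Integrable (B i) P) (hBLinf : ∀ i, MemLp (B i) ⊤ P)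
    -- L(∞) finite, positive, and L ≤ L(∞) on ℝ_+
    (Linf : ℝ) (hLinfpos : 0 < Linf) (hLinf : Tendsto L atTop (𝓝 Linf))
    (hLle : ∀ x : ℝ, 0 ≤ x → L x ≤ Linf)
    -- the supercritical index
    (i : Fin N) (hri : ∫ α, K i α * Linf ∂P < r i)
    -- a solution with nonnegative initial data and n_i(0) > 0
    (n : ℝ → Fin N → ℝ) (h0 : ∀ j, 0 ≤ n 0 j) (h0i : 0 < n 0 i)
    (hsol : ∀ t : ℝ, 0 ≤ t → ∀ k, HasDerivAt (fun s => n s k)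
      ((r k - ∫ α, K k α * L (∑ j, B j α * n t j) ∂P) * n t k) t) :
    Filter.Tendsto (fun t => n t i) Filter.atTop Filter.atTop :=
  explosion_of_supercritical_component_general P L hLC1 hLnonneg r K B hKnonneg hBnonneg hKL1 hBLinf
    Linf hLle i hri n h0 h0i hsol
end
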